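/- If f : R^p → R is differentiable with G-Lipschitz gradient, then for every μ > 0 and every x ∈ R^p, the gradient of the Gaussian smoothing satisfies ||∇f_μ(x) − ∇f(x)|| ≤ μ G √p. -/

import Mathlib

open MeasureTheory ProbabilityTheory

noncomputable def stdGaussian (p : ℕ) : Measure (EuclideanSpace ℝ (Fin p)) :=
  Measure.map (MeasurableEquiv.toLp 2 (Fin p → ℝ)) (Measure.pi fun _ => gaussianReal 0 1)

open Metric
open scoped NNReal

/-!
Differentiating under the integral sign gives `∇f_μ(x) = E[∇f(x + μu)]`, hence
`‖∇f_μ(x) - ∇f(x)‖ ≤ E‖∇f(x + μu) - ∇f(x)‖ ≤ μ G E‖u‖ ≤ μ G √(E‖u‖²) = μ G √p`.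
The differentiation is legitimate because a Lipschitz gradient grows at most linearly and `f` at
most quadratically, while `u` has a finite second moment.
-/

lemma norm_gradient_sub_gradient {E : Type*} [NormedAddCommGroup E] [InnerProductSpace ℝ E]
    [CompleteSpace E] (f g : E → ℝ) (x y : E) :
    ‖gradient f x - gradient g y‖ = ‖fderiv ℝ f x - fderiv ℝ g y‖ := by
  rw [gradient, gradient, ← map_sub, LinearIsometryEquiv.norm_map]

lemma nonneg_of_norm_sub_le_mul {E F : Type*} [NormedAddCommGroup E] [Nontrivial E]
    [NormedAddCommGroup F] {φ : E → F} {G : ℝ} (h : ∀ x y, ‖φ x - φ y‖ ≤ G * ‖x - y‖) :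
    0 ≤ G := by
  obtain ⟨y, hy⟩ := exists_ne (0 : E)
  have := (norm_nonneg _).trans (h y 0)
  rw [sub_zero] at this
  exact nonneg_of_mul_nonneg_left this (norm_pos_iff.mpr hy)

section LipschitzFDeriv

variable {E : Type*} [NormedAddCommGroup E] [NormedSpace ℝ E] {f : E → ℝ} {K : ℝ≥0}

lemma norm_fderiv_le_add_of_lipschitzWith (hf' : LipschitzWith K (fderiv ℝ f)) (a b : E) :
    ‖fderiv ℝ f b‖ ≤ ‖fderiv ℝ f a‖ + K * ‖b - a‖ := by
  have := hf'.dist_le_mul b a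
  rw [dist_eq_norm, dist_eq_norm] at this
  linarith [norm_le_norm_add_norm_sub' (fderiv ℝ f b) (fderiv ℝ f a)]

lemma norm_sub_le_of_lipschitzWith_fderiv (hf : Differentiable ℝ f)
    (hf' : LipschitzWith K (fderiv ℝ f)) (a b : E) :
    ‖f b - f a‖ ≤ (‖fderiv ℝ f a‖ + K * ‖b - a‖) * ‖b - a‖ := by
  refine (convex_closedBall a ‖b - a‖).norm_image_sub_le_of_norm_fderiv_le
    (fun z _ => hf z) (fun z hz => ?_) (mem_closedBall_self (norm_nonneg _))
    (by simp [mem_closedBall, dist_eq_norm])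
  rw [mem_closedBall, dist_eq_norm] at hz
  grw [norm_fderiv_le_add_of_lipschitzWith hf' a z, hz]

end LipschitzFDeriv

section Expectation

variable {Ω E : Type*} [MeasurableSpace Ω] {ν : Measure Ω} [NormedAddCommGroup E] {g : Ω → E}

lemma integral_norm_le_sqrt_integral_norm_sq [IsProbabilityMeasure ν] (hg : MemLp g 2 ν) :
    ∫ ω, ‖g ω‖ ∂ν ≤ √(∫ ω, ‖g ω‖ ^ 2 ∂ν) := by
  have := variance_nonneg (fun ω => ‖g ω‖) ν
  rw [variance_eq_sub hg.norm] at this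
  exact Real.le_sqrt_of_sq_le (by simpa using this)

variable [NormedSpace ℝ E] {f : E → ℝ} {K : ℝ≥0}

lemma integrable_fderiv_comp_add (hf' : LipschitzWith K (fderiv ℝ f)) [IsFiniteMeasure ν]
    (hg : Integrable g ν) (x : E) :
    Integrable (fun ω => fderiv ℝ f (x + g ω)) ν := by
  refine Integrable.mono' ((integrable_const ‖fderiv ℝ f x‖).add (hg.norm.const_mul K))
    ((hf'.continuous.comp (continuous_const_add x)).comp_aestronglyMeasurable hg.1) ?_
  filter_upwards with ω
  simpa using norm_fderiv_le_add_of_lipschitzWith hf' x (x + g ω)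

lemma integrable_comp_add (hf : Differentiable ℝ f) (hf' : LipschitzWith K (fderiv ℝ f))
    [IsFiniteMeasure ν] (hg : MemLp g 2 ν) (x : E) :
    Integrable (fun ω => f (x + g ω)) ν := by
  refine Integrable.mono' (((integrable_const |f x|).add
    ((hg.integrable one_le_two).norm.const_mul ‖fderiv ℝ f x‖)).add
    ((hg.integrable_norm_pow two_ne_zero).const_mul K))
    ((hf.continuous.comp (continuous_const_add x)).comp_aestronglyMeasurable hg.1) ?_
  filter_upwards with ω
  have := norm_sub_le_of_lipschitzWith_fderiv hf hf' x (x + g ω)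
  simp only [add_sub_cancel_left, Real.norm_eq_abs, Pi.add_apply] at this ⊢
  nlinarith [abs_sub_abs_le_abs_sub (f (x + g ω)) (f x)]

lemma hasFDerivAt_integral_comp_add (hf : Differentiable ℝ f) (hf' : LipschitzWith K (fderiv ℝ f))
    [IsFiniteMeasure ν] (hg : MemLp g 2 ν) (x : E) :
    HasFDerivAt (fun y => ∫ ω, f (y + g ω) ∂ν) (∫ ω, fderiv ℝ f (x + g ω) ∂ν) x := by
  have hg₁ : Integrable g ν := hg.integrable one_le_two
  refine hasFDerivAt_integral_of_dominated_of_fderiv_le (ball_mem_nhds x one_pos)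
    (F' := fun y ω => fderiv ℝ f (y + g ω)) (bound := fun ω => ‖fderiv ℝ f x‖ + K * (1 + ‖g ω‖))
    (Filter.Eventually.of_forall fun y => (integrable_comp_add hf hf' hg y).1)
    (integrable_comp_add hf hf' hg x) (integrable_fderiv_comp_add hf' hg₁ x).1 ?_
    ((integrable_const _).add ((((integrable_const 1).add hg₁.norm)).const_mul K)) ?_
  · filter_upwards with ω y hy
    rw [mem_ball, dist_eq_norm] at hy
    have hdist : ‖y + g ω - x‖ ≤ 1 + ‖g ω‖ := by
      rw [add_sub_right_comm]
      exact (norm_add_le _ _).trans (by linarith)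
    grw [norm_fderiv_le_add_of_lipschitzWith hf' x (y + g ω), hdist]
  · filter_upwards with ω y _
    exact (hf (y + g ω)).hasFDerivAt.comp y ((hasFDerivAt_id y).add_const (g ω))

lemma norm_integral_fderiv_comp_add_sub_le (hf' : LipschitzWith K (fderiv ℝ f))
    [IsProbabilityMeasure ν] (hg : Integrable g ν) (x : E) :
    ‖∫ ω, fderiv ℝ f (x + g ω) ∂ν - fderiv ℝ f x‖ ≤ K * ∫ ω, ‖g ω‖ ∂ν := by
  have hint := integrable_fderiv_comp_add hf' hg x
  calc ‖∫ ω, fderiv ℝ f (x + g ω) ∂ν - fderiv ℝ f x‖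
      = ‖∫ ω, (fderiv ℝ f (x + g ω) - fderiv ℝ f x) ∂ν‖ := by
        rw [integral_sub hint (integrable_const _), integral_const, probReal_univ, one_smul]
    _ ≤ ∫ ω, ‖fderiv ℝ f (x + g ω) - fderiv ℝ f x‖ ∂ν := norm_integral_le_integral_norm _
    _ ≤ ∫ ω, K * ‖g ω‖ ∂ν := by
        refine integral_mono (hint.sub (integrable_const _)).norm (hg.norm.const_mul K) fun ω => ?_
        simpa [dist_eq_norm] using hf'.dist_le_mul (x + g ω) x
    _ = K * ∫ ω, ‖g ω‖ ∂ν := integral_const_mul _ _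

end Expectation

lemma integral_sq_gaussianReal : ∫ x, x ^ 2 ∂gaussianReal 0 1 = 1 := by
  rw [← variance_of_integral_eq_zero (X := fun x => x) aemeasurable_id' integral_id_gaussianReal]
  exact variance_fun_id_gaussianReal

lemma stdGaussian_eq (p : ℕ) :
    stdGaussian p = ProbabilityTheory.stdGaussian (EuclideanSpace ℝ (Fin p)) := by
  rw [_root_.stdGaussian, MeasurableEquiv.coe_toLp, map_pi_eq_stdGaussian]

instance (p : ℕ) : IsGaussian (stdGaussian p) := by
  rw [stdGaussian_eq]
  infer_instance

lemma integral_norm_sq_stdGaussian (p : ℕ) : ∫ u, ‖u‖ ^ 2 ∂stdGaussian p = p := by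
  rw [_root_.stdGaussian, integral_map (by fun_prop) (by fun_prop)]
  simp_rw [MeasurableEquiv.coe_toLp, EuclideanSpace.real_norm_sq_eq]
  rw [integral_finsetSum _ fun i _ =>
    integrable_comp_eval (μ := fun _ => gaussianReal 0 1) (f := fun x : ℝ => x ^ 2)
      (memLp_id_gaussianReal 2).integrable_sq]
  have hcoord (i : Fin p) : ∫ x, x i ^ 2 ∂Measure.pi (fun _ => gaussianReal 0 1) = 1 :=
    (integral_comp_eval (μ := fun _ => gaussianReal 0 1) (f := fun x : ℝ => x ^ 2)
      (by fun_prop)).trans integral_sq_gaussianReal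
  simp [hcoord]

lemma integral_norm_stdGaussian_le (p : ℕ) : ∫ u, ‖u‖ ∂stdGaussian p ≤ √p := by
  simpa [integral_norm_sq_stdGaussian] using
    integral_norm_le_sqrt_integral_norm_sq (IsGaussian.memLp_two_id (μ := stdGaussian p))

/-- If f is differentiable with G-Lipschitz gradient, then the gradient of its Gaussian smoothing satisfies the bias bound: norm of (grad f_mu x - grad f x) <= mu * G * sqrt p. -/
theorem stmt_3 (p : ℕ) (f : EuclideanSpace ℝ (Fin p) → ℝ)
    (hdiff : Differentiable ℝ f) (G : ℝ)
    (hG : ∀ x y, ‖gradient f x - gradient f y‖ ≤ G * ‖x - y‖)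
    (μ : ℝ) (hμ : 0 < μ) (x : EuclideanSpace ℝ (Fin p)) :
    ‖gradient (fun y => ∫ u, f (y + μ • u) ∂(stdGaussian p)) x - gradient f x‖
      ≤ μ * G * Real.sqrt p := by
  obtain rfl | hp := p.eq_zero_or_pos
  · simp [Subsingleton.elim (gradient _ x) (gradient f x)]
  have : NeZero p := ⟨hp.ne'⟩
  simp only [norm_gradient_sub_gradient] at hG ⊢
  have hG₀ : 0 ≤ G := nonneg_of_norm_sub_le_mul hG
  have hf' : LipschitzWith G.toNNReal (fderiv ℝ f) :=
    .of_dist_le' fun a b => by simpa only [dist_eq_norm] using hG a b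
  have hg : MemLp (fun u => μ • u) 2 (stdGaussian p) := IsGaussian.memLp_two_id.const_smul μ
  rw [(hasFDerivAt_integral_comp_add hdiff hf' hg x).fderiv]
  calc _ ≤ G.toNNReal * ∫ u, ‖μ • u‖ ∂stdGaussian p :=
        norm_integral_fderiv_comp_add_sub_le hf' (hg.integrable one_le_two) x
    _ = μ * G * ∫ u, ‖u‖ ∂stdGaussian p := by
        simp only [norm_smul, Real.norm_of_nonneg hμ.le, integral_const_mul,
          Real.coe_toNNReal G hG₀]
        ring
    _ ≤ μ * G * √p := by
        gcongr
        exact integral_norm_stdGaussian_le p
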